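/- Let T be a complex connected torus acting algebraically on X = P^1(C), and let E be a T-equivariant algebraic vector bundle on X. Then there exist T-equivariant algebraic line subbundles L_1, ..., L_m of E such that the natural map L_1 ⊕ ... ⊕ L_m → E over P^1, given by (v_1, ..., v_m) ↦ v_1 + ... + v_m, is a T-equivariant isomorphism of vector bundles. -/

import Mathlib

/-!
Concrete model of algebraic vector bundles on ℙ¹(ℂ):

ℙ¹(ℂ) is the quotient of the tautological ℂˣ-torsor `ℂ² ∖ {0}` by scaling.
Every algebraic vector bundle on ℙ¹ pulls back to the trivial bundle on `ℂ² ∖ {0}`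
(Pic(ℂ²∖{0}) = 0 and Quillen–Suslin), so algebraic vector bundles of rank `k` on ℙ¹
correspond exactly to algebraic descent cocycles `c : ℂˣ × (ℂ²∖{0}) → GL_k(ℂ)`,
global algebraic sections correspond to algebraic maps `σ : ℂ²∖{0} → ℂᵏ` with
`σ(λ·v) = c(λ,v)·σ(v)`, etc.  Regular functions on `ℂ²∖{0}` are exactly polynomials
(Hartogs), and regular functions on `(ℂˣ)^r × (ℂ²∖{0})` are Laurent polynomials in
the torus variables with polynomial coefficients in `v`.
-/

noncomputable section

open MvPolynomial Matrix

/-- Nonzero vectors of ℂ²: the tautological ℂˣ-torsor over ℙ¹(ℂ). -/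
abbrev V2x : Type := {v : Fin 2 → ℂ // v ≠ 0}

/-- The scaling action of ℂˣ on nonzero vectors. -/
def usmul (lam : ℂˣ) (v : V2x) : V2x :=
  ⟨(lam : ℂ) • v.1, smul_ne_zero (Units.ne_zero lam) v.2⟩

/-- Regular (algebraic) functions on `ℂ² ∖ {0}` are exactly restrictions of polynomials. -/
def IsReg (f : V2x → ℂ) : Prop :=
  ∃ P : MvPolynomial (Fin 2) ℂ, ∀ v : V2x, f v = eval v.1 P

/-- Regular (algebraic) functions on `(ℂˣ)^r × (ℂ² ∖ {0})`: Laurent polynomials in the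
torus variables with coefficients that are polynomial in the vector variable. -/
def IsRegT {r : ℕ} (f : (Fin r → ℂˣ) → V2x → ℂ) : Prop :=
  ∃ (N : ℕ) (P : MvPolynomial (Fin r ⊕ Fin 2) ℂ), ∀ t v,
    f t v = eval (Sum.elim (fun i => (t i : ℂ)) v.1) P / (∏ i, (t i : ℂ)) ^ N

/-- An algebraic vector bundle of rank `k` on ℙ¹(ℂ), presented by its (algebraic)
ℂˣ-descent cocycle on the tautological torsor `ℂ² ∖ {0}`. -/
structure Cocycle (k : ℕ) where
  c : ℂˣ → V2x → Matrix (Fin k) (Fin k) ℂ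
  alg : ∀ i j, IsRegT (r := 1) fun t v => c (t 0) v i j
  mul : ∀ lam mu v, c (lam * mu) v = c lam (usmul mu v) * c mu v
  one : ∀ v, c 1 v = 1

/-- A global algebraic section of the bundle presented by the cocycle `E`. -/
structure Section' {k : ℕ} (E : Cocycle k) where
  s : V2x → Fin k → ℂ
  alg : ∀ i, IsReg fun v => s v i
  compat : ∀ lam v, s (usmul lam v) = (E.c lam v).mulVec (s v)

/-- A morphism of algebraic vector bundles on ℙ¹(ℂ), in the cocycle presentation. -/
structure BMap {k l : ℕ} (E : Cocycle k) (F : Cocycle l) where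
  h : V2x → Matrix (Fin l) (Fin k) ℂ
  alg : ∀ i j, IsReg fun v => h v i j
  compat : ∀ lam v, h (usmul lam v) * E.c lam v = F.c lam v * h v

/-- The action on `ℂ² ∖ {0}` induced by a linear action of the torus `(ℂˣ)^r` on ℂ². -/
def act {r : ℕ} (ρ : (Fin r → ℂˣ) →* GL (Fin 2) ℂ) (t : Fin r → ℂˣ) (v : V2x) : V2x :=
  ⟨(ρ t).val.mulVec v.1, by
    intro h
    apply v.2
    have h2 : ((ρ t)⁻¹).val.mulVec ((ρ t).val.mulVec v.1) = 0 := by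
      rw [h, Matrix.mulVec_zero]
    rwa [Matrix.mulVec_mulVec, Units.inv_mul, Matrix.one_mulVec] at h2⟩

/-- The homomorphism `ρ : (ℂˣ)^r → GL₂(ℂ)` is algebraic.  (An algebraic action of the
torus `T = (ℂˣ)^r` on ℙ¹(ℂ) is precisely the projective action induced by such a `ρ`.) -/
def IsAlgHom {r : ℕ} (ρ : (Fin r → ℂˣ) →* GL (Fin 2) ℂ) : Prop :=
  ∀ i j, IsRegT fun t (_ : V2x) => (ρ t).val i j

/-- A `T`-equivariant structure on the algebraic vector bundle `E` over ℙ¹(ℂ), lifting the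
`T`-action on ℙ¹ induced by `ρ`: an algebraic action of `T = (ℂˣ)^r` on the total space by
bundle maps, linear on fibers, written out on the torsor `ℂ² ∖ {0}` via
`t · (v, w) = (ρ(t)v, b(t,v)w)`. -/
structure EqStruct {r k : ℕ} (ρ : (Fin r → ℂˣ) →* GL (Fin 2) ℂ) (E : Cocycle k) where
  b : (Fin r → ℂˣ) → V2x → Matrix (Fin k) (Fin k) ℂ
  alg : ∀ i j, IsRegT fun t v => b t v i j
  compat : ∀ t lam v, b t (usmul lam v) * E.c lam v = E.c lam (act ρ t v) * b t v
  mul : ∀ t t' v, b (t * t') v = b t (act ρ t' v) * b t' v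
  one : ∀ v, b 1 v = 1

/-- A `T`-equivariant algebraic subbundle of rank `d` of the `T`-equivariant bundle `(E, S)`:
a family of `d`-dimensional subspaces of the fibers, compatible with the descent cocycle and
stable under the `T`-action, and Zariski-locally spanned by algebraic (rational, regular near
the given point) sections. -/
structure EqSub {r k : ℕ} (ρ : (Fin r → ℂˣ) →* GL (Fin 2) ℂ) (E : Cocycle k)
    (S : EqStruct ρ E) (d : ℕ) where
  p : V2x → Submodule ℂ (Fin k → ℂ)
  rank_eq : ∀ v, Module.finrank ℂ (p v) = d
  scal : ∀ lam v, p (usmul lam v) = (p v).map (E.c lam v).mulVecLin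
  equivariant : ∀ t v, p (act ρ t v) = (p v).map (S.b t v).mulVecLin
  locfree : ∀ v₀ : V2x, ∃ (num : Fin d → Fin k → MvPolynomial (Fin 2) ℂ)
      (den : MvPolynomial (Fin 2) ℂ), eval v₀.1 den ≠ 0 ∧
      ∀ v : V2x, eval v.1 den ≠ 0 →
        p v = Submodule.span ℂ (Set.range fun j => fun i => eval v.1 (num j i) / eval v.1 den)


namespace EqGroth

open Finset

/-! ### Basics on the scaling and torus actions -/

lemma usmul_one (v : V2x) : usmul 1 v = v := Subtype.ext (by simp [usmul])

lemma usmul_mul (a b : ℂˣ) (v : V2x) : usmul (a * b) v = usmul a (usmul b v) :=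
  Subtype.ext (by simp [usmul, mul_smul])

lemma act_one {r : ℕ} (ρ : (Fin r → ℂˣ) →* GL (Fin 2) ℂ) (v : V2x) : act ρ 1 v = v :=
  Subtype.ext (by simp [act])

lemma act_mul {r : ℕ} (ρ : (Fin r → ℂˣ) →* GL (Fin 2) ℂ) (t t' : Fin r → ℂˣ) (v : V2x) :
    act ρ (t * t') v = act ρ t (act ρ t' v) :=
  Subtype.ext (by simp only [act, map_mul, Units.val_mul, ← Matrix.mulVec_mulVec])

lemma act_usmul {r : ℕ} (ρ : (Fin r → ℂˣ) →* GL (Fin 2) ℂ) (t : Fin r → ℂˣ) (lam : ℂˣ)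
    (v : V2x) : act ρ t (usmul lam v) = usmul lam (act ρ t v) :=
  Subtype.ext (by simp [act, usmul, Matrix.mulVec_smul])

/-! ### Vanishing lemmas -/

/-- A polynomial vanishing on the torus is zero. -/
lemma eq_zero_of_torus_vanish {s : ℕ} (P : MvPolynomial (Fin s) ℂ)
    (h : ∀ g : Fin s → ℂˣ, eval (fun i => (g i : ℂ)) P = 0) : P = 0 := by
  have key : (∏ i, (X i : MvPolynomial (Fin s) ℂ)) * P = 0 := by
    apply MvPolynomial.funext
    intro x
    rw [map_zero, _root_.map_mul]
    by_cases hx : ∀ i, x i ≠ 0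
    · have := h fun i => Units.mk0 (x i) (hx i)
      simp only [Units.val_mk0] at this
      simp [this]
    · push_neg at hx
      obtain ⟨i, hi⟩ := hx
      have : eval x (∏ j, (X j : MvPolynomial (Fin s) ℂ)) = 0 := by
        rw [_root_.map_prod]
        exact Finset.prod_eq_zero (Finset.mem_univ i) (by simp [hi])
      rw [this, zero_mul]
  rcases mul_eq_zero.1 key with h0 | h0
  · exact absurd h0 (Finset.prod_ne_zero_iff.2 fun i _ => MvPolynomial.X_ne_zero i)
  · exact h0

/-- Evaluation of a 2-variable polynomial along a line through the origin, as a
one-variable polynomial. -/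
lemma polyeval_line (P : MvPolynomial (Fin 2) ℂ) (w : Fin 2 → ℂ) (t : ℂ) :
    Polynomial.eval t (MvPolynomial.eval₂ (Polynomial.C : ℂ →+* Polynomial ℂ)
      (fun i => Polynomial.C (w i) * Polynomial.X) P) = eval (fun i => w i * t) P := by
  have h : (Polynomial.evalRingHom t).comp
      (MvPolynomial.eval₂Hom (Polynomial.C : ℂ →+* Polynomial ℂ)
        (fun i => Polynomial.C (w i) * Polynomial.X))
      = MvPolynomial.eval₂Hom (RingHom.id ℂ) (fun i => w i * t) := by
    apply MvPolynomial.ringHom_ext <;> intro i <;> simp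
  have := RingHom.congr_fun h P
  simp only [RingHom.comp_apply, MvPolynomial.coe_eval₂Hom, Polynomial.coe_evalRingHom] at this
  rw [this, MvPolynomial.eval₂_id]

/-- A polynomial in two variables vanishing away from the origin is zero. -/
lemma eq_zero_of_v2x_vanish (P : MvPolynomial (Fin 2) ℂ)
    (h : ∀ v : V2x, eval v.1 P = 0) : P = 0 := by
  apply MvPolynomial.funext
  intro x
  rw [map_zero]
  by_cases hx : x = 0
  · -- approach the origin along a line
    set q : Polynomial ℂ := MvPolynomial.eval₂ (Polynomial.C : ℂ →+* Polynomial ℂ)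
      (fun i => Polynomial.C ((![1, 0] : Fin 2 → ℂ) i) * Polynomial.X) P with hq
    have hq0 : q = 0 := by
      apply Polynomial.eq_zero_of_infinite_isRoot
      apply Set.Infinite.mono (s := {t : ℂ | t ≠ 0})
      · intro t ht
        have hv : (fun i => (![1, 0] : Fin 2 → ℂ) i * t) ≠ 0 := by
          intro hc
          have := congrFun hc 0
          simp at this
          exact ht this
        simp only [Set.mem_setOf_eq, Polynomial.IsRoot, hq, polyeval_line]
        exact h ⟨_, hv⟩
      · exact Set.Finite.infinite_compl (Set.finite_singleton 0)
    have := polyeval_line P ![1, 0] 0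
    rw [← hq, hq0] at this
    simp only [Polynomial.eval_zero] at this
    rw [hx]
    have hfun : (fun i => (![1, 0] : Fin 2 → ℂ) i * 0) = (0 : Fin 2 → ℂ) := by
      funext i; simp
    rw [hfun] at this
    exact this.symm
  · exact h ⟨x, hx⟩

/-- Uniqueness of Laurent coefficients: scalar version. -/
lemma laurent_coeff_unique {s : ℕ} (S : Finset (Fin s →₀ ℕ)) (w u : (Fin s →₀ ℕ) → ℂ)
    (h : ∀ g : Fin s → ℂˣ,
      ∑ m ∈ S, w m * ∏ i, (g i : ℂ) ^ m i = ∑ m ∈ S, u m * ∏ i, (g i : ℂ) ^ m i) :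
    ∀ m ∈ S, w m = u m := by
  intro m₀ hm₀
  have hP : (∑ m ∈ S, monomial m (w m - u m)) = 0 := by
    apply eq_zero_of_torus_vanish
    intro g
    rw [map_sum]
    have : ∀ m ∈ S, eval (fun i => (g i : ℂ)) (monomial m (w m - u m))
        = (w m - u m) * ∏ i, (g i : ℂ) ^ m i := by
      intro m _
      rw [MvPolynomial.eval_monomial]
      congr 1
      exact Finsupp.prod_fintype _ _ fun i => pow_zero _
    rw [Finset.sum_congr rfl this]
    have := h g
    simp only [sub_mul, Finset.sum_sub_distrib]
    rw [this, sub_self]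
  have := congrArg (MvPolynomial.coeff m₀) hP
  rw [MvPolynomial.coeff_sum] at this
  simp only [MvPolynomial.coeff_monomial, MvPolynomial.coeff_zero] at this
  rw [Finset.sum_ite_eq' S m₀ (fun m => w m - u m), if_pos hm₀] at this
  exact sub_eq_zero.1 this

/-! ### Decomposition of polynomials in torus and plane variables -/

/-- Coefficients of `P` with respect to the torus variables. -/
noncomputable def torusCoeff {s : ℕ} (P : MvPolynomial (Fin s ⊕ Fin 2) ℂ)
    (m : Fin s →₀ ℕ) : MvPolynomial (Fin 2) ℂ :=
  MvPolynomial.coeff m (MvPolynomial.sumToIter ℂ (Fin s) (Fin 2) P)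

/-- The torus-variable support of `P`. -/
noncomputable def torusSupp {s : ℕ} (P : MvPolynomial (Fin s ⊕ Fin 2) ℂ) :
    Finset (Fin s →₀ ℕ) :=
  (MvPolynomial.sumToIter ℂ (Fin s) (Fin 2) P).support

lemma torusCoeff_eq_zero {s : ℕ} {P : MvPolynomial (Fin s ⊕ Fin 2) ℂ} {m : Fin s →₀ ℕ}
    (h : m ∉ torusSupp P) : torusCoeff P m = 0 :=
  MvPolynomial.notMem_support_iff.1 h

lemma eval_decomp {s : ℕ} (P : MvPolynomial (Fin s ⊕ Fin 2) ℂ) (g : Fin s → ℂ)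
    (v : Fin 2 → ℂ) :
    eval (Sum.elim g v) P
      = ∑ m ∈ torusSupp P, eval v (torusCoeff P m) * ∏ i, g i ^ m i := by
  have key : (MvPolynomial.eval₂Hom (MvPolynomial.eval v) g).comp
        (MvPolynomial.sumToIter ℂ (Fin s) (Fin 2))
      = MvPolynomial.eval₂Hom (RingHom.id ℂ) (Sum.elim g v) := by
    apply MvPolynomial.ringHom_ext
    · intro a; simp [MvPolynomial.sumToIter_C]
    · rintro (b | c) <;> simp [MvPolynomial.sumToIter_Xl, MvPolynomial.sumToIter_Xr]
  have h1 := RingHom.congr_fun key P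
  simp only [RingHom.comp_apply, MvPolynomial.coe_eval₂Hom] at h1
  rw [MvPolynomial.eval₂_id] at h1
  rw [← h1, MvPolynomial.eval₂_eq']
  rfl

/-! ### Calculus of regular functions -/

lemma isRegT_const {s : ℕ} (a : ℂ) : IsRegT (r := s) fun _ _ => a :=
  ⟨0, C a, fun t v => by simp⟩

lemma isRegT_coord {s : ℕ} (j : Fin 2) : IsRegT (r := s) fun _ v => v.1 j :=
  ⟨0, X (Sum.inr j), fun t v => by simp⟩

lemma isRegT_h {s : ℕ} (i : Fin s) : IsRegT (r := s) fun h _ => ((h i : ℂˣ) : ℂ) :=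
  ⟨0, X (Sum.inl i), fun t v => by simp⟩

lemma isRegT_hinv {s : ℕ} (i : Fin s) :
    IsRegT (r := s) fun h _ => (((h i)⁻¹ : ℂˣ) : ℂ) := by
  refine ⟨1, ∏ j ∈ Finset.univ.erase i, X (Sum.inl j), fun t v => ?_⟩
  have hne : ∀ j : Fin s, ((t j : ℂ)) ≠ 0 := fun j => Units.ne_zero (t j)
  rw [_root_.map_prod]
  simp only [MvPolynomial.eval_X, Sum.elim_inl, pow_one]
  rw [Units.val_inv_eq_inv_val, eq_div_iff (Finset.prod_ne_zero_iff.2 fun j _ => hne j)]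
  rw [← Finset.mul_prod_erase Finset.univ _ (Finset.mem_univ i)]
  rw [inv_mul_cancel_left₀ (hne i)]

lemma isRegT_add {s : ℕ} {f g : (Fin s → ℂˣ) → V2x → ℂ} (hf : IsRegT f) (hg : IsRegT g) :
    IsRegT fun h v => f h v + g h v := by
  obtain ⟨N₁, P₁, h₁⟩ := hf
  obtain ⟨N₂, P₂, h₂⟩ := hg
  refine ⟨N₁ + N₂, P₁ * (∏ i, X (Sum.inl i)) ^ N₂ + P₂ * (∏ i, X (Sum.inl i)) ^ N₁,
    fun t v => ?_⟩
  have hne : (∏ i, (t i : ℂ)) ≠ 0 := Finset.prod_ne_zero_iff.2 fun j _ => Units.ne_zero _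
  have hprod : eval (Sum.elim (fun i => ((t i : ℂˣ) : ℂ)) v.1)
      (∏ i, (X (Sum.inl i) : MvPolynomial (Fin s ⊕ Fin 2) ℂ)) = ∏ i, (t i : ℂ) := by
    rw [_root_.map_prod]; simp
  show f t v + g t v = _
  rw [h₁, h₂, _root_.map_add, _root_.map_mul, _root_.map_mul, _root_.map_pow,
    _root_.map_pow, hprod]
  rw [div_add_div _ _ (pow_ne_zero _ hne) (pow_ne_zero _ hne)]
  rw [div_eq_div_iff (mul_ne_zero (pow_ne_zero _ hne) (pow_ne_zero _ hne)) (pow_ne_zero _ hne)]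
  ring

lemma isRegT_mul {s : ℕ} {f g : (Fin s → ℂˣ) → V2x → ℂ} (hf : IsRegT f) (hg : IsRegT g) :
    IsRegT fun h v => f h v * g h v := by
  obtain ⟨N₁, P₁, h₁⟩ := hf
  obtain ⟨N₂, P₂, h₂⟩ := hg
  refine ⟨N₁ + N₂, P₁ * P₂, fun t v => ?_⟩
  show f t v * g t v = _
  rw [h₁, h₂, _root_.map_mul, div_mul_div_comm, ← pow_add]

lemma isRegT_sum {s : ℕ} {ι : Type*} (A : Finset ι) (f : ι → (Fin s → ℂˣ) → V2x → ℂ)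
    (hf : ∀ a ∈ A, IsRegT (f a)) : IsRegT fun h v => ∑ a ∈ A, f a h v := by
  classical
  induction A using Finset.induction_on with
  | empty => simpa using isRegT_const (s := s) 0
  | insert b A' hnotmem ih =>
    simp only [Finset.sum_insert hnotmem]
    exact isRegT_add (hf b (Finset.mem_insert_self b A'))
      (ih fun a ha => hf a (Finset.mem_insert_of_mem ha))

lemma isRegT_pow {s : ℕ} {f : (Fin s → ℂˣ) → V2x → ℂ} (hf : IsRegT f) (n : ℕ) :
    IsRegT fun h v => f h v ^ n := by
  induction n with
  | zero => simpa using isRegT_const (s := s) 1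
  | succ n ih => simp only [pow_succ]; exact isRegT_mul ih hf

lemma isRegT_prod {s : ℕ} {ι : Type*} (A : Finset ι) (f : ι → (Fin s → ℂˣ) → V2x → ℂ)
    (hf : ∀ a ∈ A, IsRegT (f a)) : IsRegT fun h v => ∏ a ∈ A, f a h v := by
  classical
  induction A using Finset.induction_on with
  | empty => simpa using isRegT_const (s := s) 1
  | insert b A' hnotmem ih =>
    simp only [Finset.prod_insert hnotmem]
    exact isRegT_mul (hf b (Finset.mem_insert_self b A'))
      (ih fun a ha => hf a (Finset.mem_insert_of_mem ha))

lemma isRegT_eval {s : ℕ} {σ : Type} [Fintype σ] (x : σ → (Fin s → ℂˣ) → V2x → ℂ)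
    (hx : ∀ a, IsRegT (x a)) (P : MvPolynomial σ ℂ) :
    IsRegT (r := s) fun h v => eval (fun a => x a h v) P := by
  induction P using MvPolynomial.induction_on with
  | C a => simpa using isRegT_const (s := s) a
  | add p q hp hq => simp only [_root_.map_add]; exact isRegT_add hp hq
  | mul_X p i hp =>
    simp only [_root_.map_mul, MvPolynomial.eval_X]
    exact isRegT_mul hp (hx i)

/-- Substitution of Laurent-monomial torus values and algebraic plane values into a
regular function. -/
lemma isRegT_subst {a s : ℕ} {F : (Fin a → ℂˣ) → V2x → ℂ} (hF : IsRegT F)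
    (θ : (Fin s → ℂˣ) → Fin a → ℂˣ) (w : (Fin s → ℂˣ) → V2x → V2x)
    (hθ : ∀ i, IsRegT (r := s) fun h _ => ((θ h i : ℂˣ) : ℂ))
    (hθi : ∀ i, IsRegT (r := s) fun h _ => (((θ h i)⁻¹ : ℂˣ) : ℂ))
    (hw : ∀ j, IsRegT (r := s) fun h v => (w h v).1 j) :
    IsRegT (r := s) fun h v => F (θ h) (w h v) := by
  obtain ⟨N, P, hP⟩ := hF
  have key : ∀ h v, F (θ h) (w h v)
      = eval (fun q => Sum.elim (fun i => ((θ h i : ℂˣ) : ℂ)) ((w h v).1) q) P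
        * (∏ i, (((θ h i)⁻¹ : ℂˣ) : ℂ)) ^ N := by
    intro h v
    rw [hP (θ h) (w h v), div_eq_mul_inv, ← inv_pow]
    simp [Units.val_inv_eq_inv_val]
  have h1 : IsRegT (r := s) fun h v =>
      eval (fun q => Sum.elim (fun i => ((θ h i : ℂˣ) : ℂ)) ((w h v).1) q) P :=
    isRegT_eval _ (by rintro (i | j); exacts [hθ i, hw j]) P
  have h2 : IsRegT (r := s) fun h v => (∏ i, (((θ h i)⁻¹ : ℂˣ) : ℂ)) ^ N :=
    isRegT_pow (isRegT_prod Finset.univ _ fun i _ => hθi i) N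
  simp only [key]
  exact isRegT_mul h1 h2

/-- Column `i` of a matrix, as a vector. -/
def colv {k : ℕ} (M : Matrix (Fin k) (Fin k) ℂ) (i : Fin k) : Fin k → ℂ := fun j => M j i

lemma colv_mul {k : ℕ} (A B : Matrix (Fin k) (Fin k) ℂ) (i : Fin k) :
    colv (A * B) i = A.mulVec (colv B i) := by
  funext j
  simp [colv, Matrix.mul_apply, Matrix.mulVec, dotProduct]

lemma colv_mul_diagonal {k : ℕ} (A : Matrix (Fin k) (Fin k) ℂ) (d : Fin k → ℂ) (i : Fin k) :
    colv (A * Matrix.diagonal d) i = d i • colv A i := by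
  funext j
  simp [colv, Matrix.mul_apply, Matrix.diagonal, mul_comm]

lemma sum_smul_colv {k : ℕ} (M : Matrix (Fin k) (Fin k) ℂ) (g : Fin k → ℂ) :
    ∑ i, g i • colv M i = M.mulVec g := by
  funext j
  simp [colv, Matrix.mulVec, dotProduct, Finset.sum_apply, mul_comm]

/-! ### The combined cocycle for the extended torus -/

section Combined

variable {r k : ℕ} (ρ : (Fin r → ℂˣ) →* GL (Fin 2) ℂ) (E : Cocycle k) (S : EqStruct ρ E)

/-- The combined action of the extended torus (torus × scaling) on the torsor. -/
def cact (t : Fin r → ℂˣ) (lam : ℂˣ) (v : V2x) : V2x := act ρ t (usmul lam v)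

/-- The combined cocycle of the equivariant bundle. -/
def cC (t : Fin r → ℂˣ) (lam : ℂˣ) (v : V2x) : Matrix (Fin k) (Fin k) ℂ :=
  S.b t (usmul lam v) * E.c lam v

lemma cact_one (v : V2x) : cact ρ 1 1 v = v := by unfold cact; rw [usmul_one, act_one]

lemma cact_mul (t t' : Fin r → ℂˣ) (lam lam' : ℂˣ) (v : V2x) :
    cact ρ (t * t') (lam * lam') v = cact ρ t lam (cact ρ t' lam' v) := by
  unfold cact
  rw [usmul_mul, act_mul]
  congr 1
  exact act_usmul ρ t' lam (usmul lam' v)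

lemma cC_one (v : V2x) : cC ρ E S 1 1 v = 1 := by
  unfold cC
  rw [usmul_one, S.one, E.one, one_mul]

lemma cC_mul (t t' : Fin r → ℂˣ) (lam lam' : ℂˣ) (v : V2x) :
    cC ρ E S (t * t') (lam * lam') v
      = cC ρ E S t lam (cact ρ t' lam' v) * cC ρ E S t' lam' v := by
  unfold cC cact
  rw [S.mul, E.mul, usmul_mul]
  rw [act_usmul ρ t' lam (usmul lam' v)]
  simp only [mul_assoc]
  rw [← mul_assoc (S.b t' (usmul lam (usmul lam' v))) (E.c lam (usmul lam' v)) (E.c lam' v)]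
  rw [S.compat t' lam (usmul lam' v)]
  simp only [mul_assoc]

lemma cC_mul_inv (t : Fin r → ℂˣ) (lam : ℂˣ) (v : V2x) :
    cC ρ E S t lam v * cC ρ E S t⁻¹ lam⁻¹ (cact ρ t lam v) = 1 := by
  have h := cC_mul ρ E S t t⁻¹ lam lam⁻¹ (cact ρ t lam v)
  rw [mul_inv_cancel, mul_inv_cancel, cC_one] at h
  rw [← cact_mul, inv_mul_cancel, inv_mul_cancel, cact_one] at h
  exact h.symm

/-- The averaging matrix `Ĝ(h, v) = Ĉ(h⁻¹, h·v)`. -/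
def Ghat (t : Fin r → ℂˣ) (lam : ℂˣ) (v : V2x) : Matrix (Fin k) (Fin k) ℂ :=
  cC ρ E S t⁻¹ lam⁻¹ (cact ρ t lam v)

lemma Ghat_one (v : V2x) : Ghat ρ E S 1 1 v = 1 := by
  unfold Ghat
  rw [inv_one, inv_one, cact_one, cC_one]

/-- The key transformation law of the averaging matrix. -/
lemma Ghat_key (t t' : Fin r → ℂˣ) (lam lam' : ℂˣ) (v : V2x) :
    cC ρ E S t' lam' v * Ghat ρ E S (t * t') (lam * lam') v
      = Ghat ρ E S t lam (cact ρ t' lam' v) := by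
  unfold Ghat
  rw [_root_.mul_inv_rev, _root_.mul_inv_rev, cact_mul]
  rw [cC_mul ρ E S t'⁻¹ t⁻¹ lam'⁻¹ lam⁻¹ (cact ρ t lam (cact ρ t' lam' v))]
  have e3 : cact ρ t⁻¹ lam⁻¹ (cact ρ t lam (cact ρ t' lam' v)) = cact ρ t' lam' v := by
    rw [← cact_mul, inv_mul_cancel, inv_mul_cancel, cact_one]
  rw [e3, ← mul_assoc, cC_mul_inv, one_mul]

lemma usmul_inv_cact (t : Fin r → ℂˣ) (lam : ℂˣ) (v : V2x) :
    usmul lam⁻¹ (cact ρ t lam v) = act ρ t v := by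
  unfold cact
  rw [← act_usmul, ← usmul_mul, inv_mul_cancel, usmul_one]

lemma act_coord_isRegT (hρ : IsAlgHom ρ) (j : Fin 2) :
    IsRegT (r := r + 1) fun h v => (act ρ (fun i => h i.castSucc) v).1 j := by
  have key : ∀ (h : Fin (r+1) → ℂˣ) (v : V2x), (act ρ (fun i => h i.castSucc) v).1 j
      = ∑ b, (ρ (fun i => h i.castSucc)).val j b * v.1 b := by
    intro h v
    simp only [act, Matrix.mulVec, dotProduct]
  simp only [key]
  refine isRegT_sum _ _ fun b _ => isRegT_mul ?_ (isRegT_coord b)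
  exact isRegT_subst (hρ j b) (fun h => fun i => h i.castSucc) (fun _ v => v)
    (fun i => isRegT_h i.castSucc) (fun i => isRegT_hinv i.castSucc)
    (fun j' => isRegT_coord j')

lemma cact_coord_isRegT (hρ : IsAlgHom ρ) (j : Fin 2) :
    IsRegT (r := r + 1) fun h v =>
      (cact ρ (fun i => h i.castSucc) (h (Fin.last r)) v).1 j := by
  have key : ∀ (h : Fin (r+1) → ℂˣ) (v : V2x),
      (cact ρ (fun i => h i.castSucc) (h (Fin.last r)) v).1 j
      = ∑ b, (ρ (fun i => h i.castSucc)).val j b * ((h (Fin.last r) : ℂ) * v.1 b) := by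
    intro h v
    unfold cact
    simp only [act, usmul, Matrix.mulVec, dotProduct, Pi.smul_apply, smul_eq_mul]
  simp only [key]
  refine isRegT_sum _ _ fun b _ => isRegT_mul ?_
    (isRegT_mul (isRegT_h (Fin.last r)) (isRegT_coord b))
  exact isRegT_subst (hρ j b) (fun h => fun i => h i.castSucc) (fun _ v => v)
    (fun i => isRegT_h i.castSucc) (fun i => isRegT_hinv i.castSucc)
    (fun j' => isRegT_coord j')

lemma Ghat_entry_isRegT (hρ : IsAlgHom ρ) (l i : Fin k) :
    IsRegT (r := r + 1) fun h v =>
      Ghat ρ E S (fun j => h j.castSucc) (h (Fin.last r)) v l i := by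
  have expand : ∀ (h : Fin (r+1) → ℂˣ) (v : V2x),
      Ghat ρ E S (fun j => h j.castSucc) (h (Fin.last r)) v l i
        = ∑ j, S.b (fun q => (h q.castSucc)⁻¹) (act ρ (fun q => h q.castSucc) v) l j
            * E.c (h (Fin.last r))⁻¹
                (cact ρ (fun q => h q.castSucc) (h (Fin.last r)) v) j i := by
    intro h v
    show (cC ρ E S (fun j => h j.castSucc)⁻¹ (h (Fin.last r))⁻¹
      (cact ρ (fun j => h j.castSucc) (h (Fin.last r)) v)) l i = _
    unfold cC
    rw [usmul_inv_cact]
    exact Matrix.mul_apply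
  simp only [expand]
  refine isRegT_sum _ _ fun j _ => isRegT_mul ?_ ?_
  · exact isRegT_subst (S.alg l j) (fun h => fun q => (h q.castSucc)⁻¹)
      (fun h v => act ρ (fun q => h q.castSucc) v)
      (fun q => isRegT_hinv q.castSucc)
      (fun q => by simpa only [inv_inv] using isRegT_h (s := r + 1) q.castSucc)
      (fun c => act_coord_isRegT ρ hρ c)
  · exact isRegT_subst (E.alg j i) (fun h => fun _ : Fin 1 => (h (Fin.last r))⁻¹)
      (fun h v => cact ρ (fun q => h q.castSucc) (h (Fin.last r)) v)
      (fun _ => isRegT_hinv (Fin.last r))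
      (fun _ => by simpa only [inv_inv] using isRegT_h (s := r + 1) (Fin.last r))
      (fun c => cact_coord_isRegT ρ hρ c)

end Combined

/-- Uniformization of denominators in a finite family of regular functions. -/
lemma isRegT_uniform {s : ℕ} {ι : Type*} [Fintype ι] (f : ι → (Fin s → ℂˣ) → V2x → ℂ)
    (hf : ∀ a, IsRegT (f a)) :
    ∃ (N : ℕ) (P : ι → MvPolynomial (Fin s ⊕ Fin 2) ℂ), ∀ a t v,
      f a t v = eval (Sum.elim (fun i => (t i : ℂ)) v.1) (P a) / (∏ i, (t i : ℂ)) ^ N := by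
  classical
  choose N P hP using hf
  refine ⟨Finset.univ.sup N,
    fun a => P a * (∏ i, X (Sum.inl i)) ^ (Finset.univ.sup N - N a), fun a t v => ?_⟩
  have hne : (∏ i, (t i : ℂ)) ≠ 0 := Finset.prod_ne_zero_iff.2 fun j _ => Units.ne_zero _
  have hprod : eval (Sum.elim (fun i => ((t i : ℂˣ) : ℂ)) v.1)
      (∏ i, (X (Sum.inl i) : MvPolynomial (Fin s ⊕ Fin 2) ℂ)) = ∏ i, (t i : ℂ) := by
    rw [_root_.map_prod]; simp
  have hle : N a ≤ Finset.univ.sup N := Finset.le_sup (Finset.mem_univ a)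
  rw [hP a t v, _root_.map_mul, _root_.map_pow, hprod]
  rw [div_eq_div_iff (pow_ne_zero _ hne) (pow_ne_zero _ hne), mul_assoc, ← pow_add]
  congr 2
  omega

/-- The master factorization lemma: an equivariant Birkhoff–Grothendieck normal form.
There is an everywhere-invertible algebraic matrix `Φ` on the torsor conjugating the
descent cocycle to `diag (λ^{a i})` and the torus action to `diag (t^{μ i})`. -/
theorem master {r k : ℕ} (ρ : (Fin r → ℂˣ) →* GL (Fin 2) ℂ)
    (hρ : IsAlgHom ρ) (E : Cocycle k) (S : EqStruct ρ E) :
    ∃ (Φ : V2x → Matrix (Fin k) (Fin k) ℂ) (a : Fin k → ℤ) (μ : Fin k → Fin r → ℤ),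
      (∀ i j, IsReg fun v => Φ v i j) ∧
      (∀ v, IsUnit (Φ v)) ∧
      (∀ lam v, Φ (usmul lam v) =
        E.c lam v * Φ v * Matrix.diagonal (fun i => (lam : ℂ) ^ (a i))) ∧
      (∀ t v, Φ (act ρ t v) =
        S.b t v * Φ v * Matrix.diagonal (fun i => ∏ j, (t j : ℂ) ^ (μ i j))) := by
  classical
  obtain ⟨N, P, hP⟩ := isRegT_uniform (ι := Fin k × Fin k)
    (fun p h v => Ghat ρ E S (fun j => h j.castSucc) (h (Fin.last r)) v p.1 p.2)
    (fun p => Ghat_entry_isRegT ρ E S hρ p.1 p.2)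
  set T : Finset (Fin (r+1) →₀ ℕ) :=
    Finset.univ.biUnion (fun p : Fin k × Fin k => torusSupp (P p)) with hT
  -- expansion of the averaging matrix entries over the common support
  have hexp : ∀ (l i : Fin k) (g : Fin (r+1) → ℂ) (v : Fin 2 → ℂ),
      eval (Sum.elim g v) (P (l, i))
        = ∑ m ∈ T, eval v (torusCoeff (P (l, i)) m) * ∏ q, g q ^ m q := by
    intro l i g v
    rw [eval_decomp]
    apply Finset.sum_subset
    · intro m hm
      exact Finset.mem_biUnion.2 ⟨(l, i), Finset.mem_univ _, hm⟩
    · intro m _ hnot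
      rw [torusCoeff_eq_zero hnot]
      simp
  have hGhat : ∀ (l i : Fin k) (h : Fin (r+1) → ℂˣ) (v : V2x),
      Ghat ρ E S (fun j => h j.castSucc) (h (Fin.last r)) v l i
        = (∑ m ∈ T, eval v.1 (torusCoeff (P (l, i)) m) * ∏ q, ((h q : ℂˣ) : ℂ) ^ m q)
            / (∏ q, ((h q : ℂˣ) : ℂ)) ^ N := by
    intro l i h v
    have h0 : Ghat ρ E S (fun j => h j.castSucc) (h (Fin.last r)) v l i
        = eval (Sum.elim (fun q => ((h q : ℂˣ) : ℂ)) v.1) (P (l, i))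
            / (∏ q, ((h q : ℂˣ) : ℂ)) ^ N := hP (l, i) h v
    rw [h0, hexp]
  -- the weight equation for the coefficient polynomials
  have hweight : ∀ (h' : Fin (r+1) → ℂˣ) (v : V2x) (l i : Fin k), ∀ m ∈ T,
      eval (cact ρ (fun q => h' q.castSucc) (h' (Fin.last r)) v).1 (torusCoeff (P (l, i)) m)
        = ((∏ q, ((h' q : ℂˣ) : ℂ) ^ m q) / (∏ q, ((h' q : ℂˣ) : ℂ)) ^ N)
            * ∑ p, cC ρ E S (fun q => h' q.castSucc) (h' (Fin.last r)) v l p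
                * eval v.1 (torusCoeff (P (p, i)) m) := by
    intro h' v l i
    apply laurent_coeff_unique T
    intro g
    have hgp : (∏ q, ((g q : ℂˣ) : ℂ)) ≠ 0 :=
      Finset.prod_ne_zero_iff.2 fun q _ => Units.ne_zero _
    have hhp : (∏ q, ((h' q : ℂˣ) : ℂ)) ≠ 0 :=
      Finset.prod_ne_zero_iff.2 fun q _ => Units.ne_zero _
    have hkey := Ghat_key ρ E S (fun q => g q.castSucc) (fun q => h' q.castSucc)
      (g (Fin.last r)) (h' (Fin.last r)) v
    have hent : ∑ p, cC ρ E S (fun q => h' q.castSucc) (h' (Fin.last r)) v l p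
          * Ghat ρ E S (fun q => (g * h') q.castSucc) ((g * h') (Fin.last r)) v p i
        = Ghat ρ E S (fun q => g q.castSucc) (g (Fin.last r))
            (cact ρ (fun q => h' q.castSucc) (h' (Fin.last r)) v) l i := by
      rw [← Matrix.mul_apply]
      exact congrFun (congrFun hkey l) i
    have hgh : ∀ p : Fin k,
        Ghat ρ E S (fun q => (g * h') q.castSucc) ((g * h') (Fin.last r)) v p i
          = (∑ m ∈ T, eval v.1 (torusCoeff (P (p, i)) m)
                * ((∏ q, ((g q : ℂˣ) : ℂ) ^ m q) * (∏ q, ((h' q : ℂˣ) : ℂ) ^ m q)))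
              / ((∏ q, ((g q : ℂˣ) : ℂ)) ^ N * (∏ q, ((h' q : ℂˣ) : ℂ)) ^ N) := by
      intro p
      have h0 := hGhat p i (g * h') v
      simp only [Pi.mul_apply, Units.val_mul] at h0 ⊢
      rw [h0]
      congr 1
      · apply Finset.sum_congr rfl
        intro m _
        congr 1
        rw [← Finset.prod_mul_distrib]
        exact Finset.prod_congr rfl fun q _ => mul_pow _ _ _
      · rw [Finset.prod_mul_distrib, mul_pow]
    simp only [hgh] at hent
    rw [hGhat l i g (cact ρ (fun q => h' q.castSucc) (h' (Fin.last r)) v)] at hent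
    have hent2 := (eq_div_iff (pow_ne_zero N hgp)).mp hent
    rw [← hent2, Finset.sum_mul]
    have hterm : ∀ p : Fin k,
        cC ρ E S (fun q => h' q.castSucc) (h' (Fin.last r)) v l p
            * ((∑ m ∈ T, eval v.1 (torusCoeff (P (p, i)) m)
                * ((∏ q, ((g q : ℂˣ) : ℂ) ^ m q) * (∏ q, ((h' q : ℂˣ) : ℂ) ^ m q)))
              / ((∏ q, ((g q : ℂˣ) : ℂ)) ^ N * (∏ q, ((h' q : ℂˣ) : ℂ)) ^ N))
            * (∏ q, ((g q : ℂˣ) : ℂ)) ^ N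
          = ∑ m ∈ T, cC ρ E S (fun q => h' q.castSucc) (h' (Fin.last r)) v l p
              * eval v.1 (torusCoeff (P (p, i)) m)
              * ((∏ q, ((g q : ℂˣ) : ℂ) ^ m q) * (∏ q, ((h' q : ℂˣ) : ℂ) ^ m q))
              / (∏ q, ((h' q : ℂˣ) : ℂ)) ^ N := by
      intro p
      have hsimp : ∀ (c Ssum gp hp : ℂ), gp ≠ 0 → hp ≠ 0 →
          c * (Ssum / (gp * hp)) * gp = c * Ssum / hp := by
        intro c Ssum gp hp h1 h2
        field_simp
      rw [hsimp _ _ _ _ (pow_ne_zero N hgp) (pow_ne_zero N hhp), Finset.mul_sum,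
        Finset.sum_div]
      apply Finset.sum_congr rfl
      intro m _
      ring
    rw [Finset.sum_congr rfl fun p _ => hterm p, Finset.sum_comm]
    apply Finset.sum_congr rfl
    intro m _
    rw [Finset.mul_sum, Finset.sum_mul]
    apply Finset.sum_congr rfl
    intro p _
    ring
  -- base identity: the coefficient polynomials sum to the identity matrix
  have hbase : ∀ l i : Fin k, (∑ m ∈ T, torusCoeff (P (l, i)) m)
      = MvPolynomial.C (if l = i then (1 : ℂ) else 0) := by
    intro l i
    have hvan : ∀ v : V2x, eval v.1
        ((∑ m ∈ T, torusCoeff (P (l, i)) m) - C (if l = i then (1:ℂ) else 0)) = 0 := by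
      intro v
      have h1 := hGhat l i 1 v
      have h2 : Ghat ρ E S (fun j => (1 : Fin (r+1) → ℂˣ) j.castSucc)
          ((1 : Fin (r+1) → ℂˣ) (Fin.last r)) v l i = (1 : Matrix (Fin k) (Fin k) ℂ) l i :=
        congrFun (congrFun (Ghat_one ρ E S v) l) i
      rw [h2] at h1
      simp only [Pi.one_apply, Units.val_one, one_pow, Finset.prod_const_one, mul_one,
        div_one] at h1
      rw [_root_.map_sub, _root_.map_sum, MvPolynomial.eval_C, ← h1, Matrix.one_apply]
      simp
    have h0 := eq_zero_of_v2x_vanish _ hvan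
    exact sub_eq_zero.1 h0
  -- the constant-term vectors
  set w : Fin k × (Fin (r+1) →₀ ℕ) → (Fin k → ℂ) :=
    fun p l => eval (0 : Fin 2 → ℂ) (torusCoeff (P (l, p.1)) p.2) with hw
  have hsingle : ∀ i : Fin k, (fun l => if l = i then (1:ℂ) else 0) ∈
      Submodule.span ℂ (Set.range w) := by
    intro i
    have hsum : (fun l => if l = i then (1:ℂ) else 0) = ∑ m ∈ T, w (i, m) := by
      funext l
      rw [Finset.sum_apply]
      have h3 := congrArg (eval (0 : Fin 2 → ℂ)) (hbase l i)
      rw [_root_.map_sum, MvPolynomial.eval_C] at h3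
      exact h3.symm
    rw [hsum]
    exact Submodule.sum_mem _ fun m _ => Submodule.subset_span (Set.mem_range_self (i, m))
  have hspanw : Submodule.span ℂ (Set.range w) = ⊤ := by
    rw [eq_top_iff]
    rintro x -
    have hx : x = ∑ i, x i • (fun l => if l = i then (1:ℂ) else 0) := by
      funext l
      rw [Finset.sum_apply]
      simp only [Pi.smul_apply, smul_eq_mul, mul_ite, mul_one, mul_zero]
      rw [Finset.sum_ite_eq Finset.univ l x]
      simp
    rw [hx]
    exact Submodule.sum_mem _ fun i _ => Submodule.smul_mem _ _ (hsingle i)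
  -- select a basis among the constant-term vectors
  have hind0 : LinearIndepOn ℂ id (∅ : Set (Fin k → ℂ)) :=
    linearIndependent_empty ℂ _
  set B := hind0.extend (Set.empty_subset (Set.range w)) with hB
  have hBsub : B ⊆ Set.range w := hind0.extend_subset _
  have hBind : LinearIndependent ℂ ((↑) : B → (Fin k → ℂ)) := hind0.linearIndepOn_extend _
  have hBspan : Set.range w ⊆ ↑(Submodule.span ℂ B) := hind0.subset_span_extend _
  have hBtop : Submodule.span ℂ B = ⊤ := by
    rw [eq_top_iff, ← hspanw]
    exact Submodule.span_le.2 hBspan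
  have hfinB : B.Finite := hBind.setFinite
  haveI := hfinB.fintype
  have bbasis : Module.Basis B ℂ (Fin k → ℂ) :=
    Module.Basis.mk hBind (by rw [Subtype.range_coe]; exact hBtop.ge)
  have hcard : Fintype.card B = k := by
    have h1 := Module.finrank_eq_card_basis bbasis
    rw [Module.finrank_pi] at h1
    simpa using h1.symm
  set e : Fin k ≃ B := (Fintype.equivFinOfCardEq hcard).symm with he
  have hidx0 : ∀ x : B, ∃ p, w p = (x : Fin k → ℂ) := fun x => hBsub x.2
  choose idx hidx using hidx0
  have hmemT : ∀ x : B, (idx x).2 ∈ T := by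
    intro x
    by_contra hnot
    have hzero : w (idx x) = 0 := by
      funext l
      have hc0 : torusCoeff (P (l, (idx x).1)) (idx x).2 = 0 := by
        apply torusCoeff_eq_zero
        intro hmem
        exact hnot (Finset.mem_biUnion.2 ⟨(l, (idx x).1), Finset.mem_univ _, hmem⟩)
      show eval (0 : Fin 2 → ℂ) (torusCoeff (P (l, (idx x).1)) (idx x).2) = 0
      rw [hc0, map_zero]
    exact hBind.ne_zero x (by rw [← hidx x, hzero])
  -- the candidate matrix and exponents
  set Q : Fin k → Fin k → MvPolynomial (Fin 2) ℂ :=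
    fun j l => torusCoeff (P (l, (idx (e j)).1)) ((idx (e j)).2) with hQ
  set Φ : V2x → Matrix (Fin k) (Fin k) ℂ :=
    fun v => Matrix.of fun l j => eval v.1 (Q j l) with hΦ
  set av : Fin k → ℤ := fun j => (((idx (e j)).2 (Fin.last r) : ℤ) - (N : ℤ)) with hav
  set μv : Fin k → Fin r → ℤ :=
    fun j q => (((idx (e j)).2 q.castSucc : ℤ) - (N : ℤ)) with hμv
  have hcol : ∀ (j : Fin k) (h' : Fin (r+1) → ℂˣ) (v : V2x) (l : Fin k),
      eval (cact ρ (fun q => h' q.castSucc) (h' (Fin.last r)) v).1 (Q j l)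
        = ((∏ q, ((h' q : ℂˣ) : ℂ) ^ ((idx (e j)).2 q)) / (∏ q, ((h' q : ℂˣ) : ℂ)) ^ N)
            * ∑ p, cC ρ E S (fun q => h' q.castSucc) (h' (Fin.last r)) v l p
                * eval v.1 (Q j p) :=
    fun j h' v l => hweight h' v l (idx (e j)).1 ((idx (e j)).2) (hmemT (e j))
  -- the scaling law
  have hscal : ∀ (lam : ℂˣ) (v : V2x), Φ (usmul lam v)
      = E.c lam v * Φ v * Matrix.diagonal (fun j => (lam : ℂ) ^ (av j)) := by
    intro lam v
    ext l j
    have hc := hcol j (Fin.snoc (fun _ => (1:ℂˣ)) lam) v l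
    have hfun : (fun q : Fin r =>
        (Fin.snoc (fun _ => (1:ℂˣ)) lam : Fin (r+1) → ℂˣ) q.castSucc) = (1 : Fin r → ℂˣ) :=
      funext fun q => Fin.snoc_castSucc _ _ _
    have hlast : (Fin.snoc (fun _ => (1:ℂˣ)) lam : Fin (r+1) → ℂˣ) (Fin.last r) = lam :=
      Fin.snoc_last _ _
    rw [hfun, hlast] at hc
    have hcact : cact ρ (1 : Fin r → ℂˣ) lam v = usmul lam v := by
      unfold cact; rw [act_one]
    have hcC : cC ρ E S (1 : Fin r → ℂˣ) lam v = E.c lam v := by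
      unfold cC; rw [S.one, one_mul]
    rw [hcact, hcC] at hc
    have hfac : (∏ q, ((Fin.snoc (fun _ => (1:ℂˣ)) lam : Fin (r+1) → ℂˣ) q : ℂ)
          ^ ((idx (e j)).2 q))
        / (∏ q, ((Fin.snoc (fun _ => (1:ℂˣ)) lam : Fin (r+1) → ℂˣ) q : ℂ)) ^ N
        = (lam : ℂ) ^ (av j) := by
      rw [Fin.prod_univ_castSucc, Fin.prod_univ_castSucc]
      simp only [Fin.snoc_castSucc, Fin.snoc_last, Units.val_one, one_pow,
        Finset.prod_const_one, one_mul]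
      rw [zpow_sub₀ (Units.ne_zero lam), zpow_natCast, zpow_natCast]
    rw [hfac] at hc
    rw [Matrix.mul_diagonal, Matrix.mul_apply]
    show eval (usmul lam v).1 (Q j l) = _
    rw [hc]
    simp only [hΦ, Matrix.of_apply]
    ring
  -- the torus equivariance law
  have hequiv : ∀ (t : Fin r → ℂˣ) (v : V2x), Φ (act ρ t v)
      = S.b t v * Φ v * Matrix.diagonal (fun j => ∏ q, (t q : ℂ) ^ (μv j q)) := by
    intro t v
    ext l j
    have hc := hcol j (Fin.snoc t (1:ℂˣ)) v l
    have hfun : (fun q : Fin r => (Fin.snoc t (1:ℂˣ) : Fin (r+1) → ℂˣ) q.castSucc) = t :=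
      funext fun q => Fin.snoc_castSucc _ _ _
    have hlast : (Fin.snoc t (1:ℂˣ) : Fin (r+1) → ℂˣ) (Fin.last r) = 1 := Fin.snoc_last _ _
    rw [hfun, hlast] at hc
    have hcact : cact ρ t (1:ℂˣ) v = act ρ t v := by unfold cact; rw [usmul_one]
    have hcC : cC ρ E S t (1:ℂˣ) v = S.b t v := by
      unfold cC; rw [usmul_one, E.one, mul_one]
    rw [hcact, hcC] at hc
    have hfac : (∏ q, ((Fin.snoc t (1:ℂˣ) : Fin (r+1) → ℂˣ) q : ℂ) ^ ((idx (e j)).2 q))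
        / (∏ q, ((Fin.snoc t (1:ℂˣ) : Fin (r+1) → ℂˣ) q : ℂ)) ^ N
        = ∏ q, (t q : ℂ) ^ (μv j q) := by
      rw [Fin.prod_univ_castSucc, Fin.prod_univ_castSucc]
      simp only [Fin.snoc_castSucc, Fin.snoc_last, Units.val_one, one_pow, mul_one]
      rw [← Finset.prod_pow, ← Finset.prod_div_distrib]
      apply Finset.prod_congr rfl
      intro q _
      simp only [hμv]
      rw [zpow_sub₀ (Units.ne_zero (t q)), zpow_natCast, zpow_natCast]
    rw [hfac] at hc
    rw [Matrix.mul_diagonal, Matrix.mul_apply]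
    show eval (act ρ t v).1 (Q j l) = _
    rw [hc]
    simp only [hΦ, Matrix.of_apply]
    ring
  -- determinants
  have hevdet : ∀ x : Fin 2 → ℂ, eval x ((Matrix.of fun l j => Q j l).det)
      = (Matrix.of fun l j => eval x (Q j l)).det := by
    intro x
    rw [RingHom.map_det]
    rfl
  have hdet0 : eval (0 : Fin 2 → ℂ) ((Matrix.of fun l j => Q j l).det) ≠ 0 := by
    rw [hevdet]
    have hcoleq : ∀ (j l : Fin k), eval (0 : Fin 2 → ℂ) (Q j l) = ((e j : Fin k → ℂ)) l :=
      fun j l => congrFun (hidx (e j)) l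
    intro hdet
    obtain ⟨g, hg0, hgker⟩ := (Matrix.exists_mulVec_eq_zero_iff).2 hdet
    have hLI : LinearIndependent ℂ (fun j : Fin k => (e j : Fin k → ℂ)) :=
      hBind.comp e e.injective
    have hsum : ∑ j, g j • colv (Matrix.of fun l j => eval (0:Fin 2 → ℂ) (Q j l)) j = 0 := by
      rw [sum_smul_colv, hgker]
    have hcols : (fun j => colv (Matrix.of fun l j => eval (0:Fin 2 → ℂ) (Q j l)) j)
        = fun j => (e j : Fin k → ℂ) := by
      funext j
      funext l
      exact hcoleq j l
    have hgz : ∀ j, g j = 0 := by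
      apply Fintype.linearIndependent_iff.1 hLI g
      have hpt : ∀ i, (e i : Fin k → ℂ)
          = colv (Matrix.of fun l j => eval (0:Fin 2 → ℂ) (Q j l)) i :=
        fun i => (congrFun hcols i).symm
      calc ∑ i, g i • (e i : Fin k → ℂ)
          = ∑ i, g i • colv (Matrix.of fun l j => eval (0:Fin 2 → ℂ) (Q j l)) i :=
            Finset.sum_congr rfl fun i _ => by rw [hpt i]
        _ = 0 := hsum
    exact hg0 (funext fun j => hgz j)
  have hunit : ∀ v : V2x, IsUnit (Φ v) := by
    intro v
    rw [Matrix.isUnit_iff_isUnit_det, isUnit_iff_ne_zero]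
    have hdetv : (Φ v).det = eval v.1 ((Matrix.of fun l j => Q j l).det) := by
      rw [hevdet]
    rw [hdetv]
    intro hv0
    have hall : ∀ tau : ℂ, tau ≠ 0 →
        eval (fun i => v.1 i * tau) ((Matrix.of fun l j => Q j l).det) = 0 := by
      intro tau htau
      have hs := congrArg Matrix.det (hscal (Units.mk0 tau htau) v)
      rw [Matrix.det_mul, Matrix.det_mul] at hs
      have h1 : (Φ v).det = 0 := by rw [hdetv]; exact hv0
      rw [h1] at hs
      have h2 : (Φ (usmul (Units.mk0 tau htau) v)).det = 0 := by rw [hs]; ring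
      have h3 : (fun i => v.1 i * tau) = (usmul (Units.mk0 tau htau) v).1 := by
        funext i
        show v.1 i * tau = _
        simp [usmul, mul_comm]
      rw [h3, hevdet]
      exact h2
    have hq : (MvPolynomial.eval₂ (Polynomial.C : ℂ →+* Polynomial ℂ)
        (fun i => Polynomial.C (v.1 i) * Polynomial.X)
        ((Matrix.of fun l j => Q j l).det)) = 0 := by
      apply Polynomial.eq_zero_of_infinite_isRoot
      apply Set.Infinite.mono (s := {t : ℂ | t ≠ 0})
      · intro tau htau
        simp only [Set.mem_setOf_eq, Polynomial.IsRoot, polyeval_line]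
        exact hall tau htau
      · exact Set.Finite.infinite_compl (Set.finite_singleton 0)
    have hlim := polyeval_line ((Matrix.of fun l j => Q j l).det) v.1 0
    rw [hq] at hlim
    simp only [Polynomial.eval_zero] at hlim
    have h0 : (fun i => v.1 i * 0) = (0 : Fin 2 → ℂ) := by funext i; simp
    rw [h0] at hlim
    exact hdet0 hlim.symm
  exact ⟨Φ, av, μv, fun i j => ⟨Q j i, fun v => rfl⟩, hunit, hscal, hequiv⟩

end EqGroth

/-- **Equivariant analogue of Grothendieck's theorem** (Kumar).
Let `T = (ℂˣ)^r` be a complex connected torus acting algebraically on `X = ℙ¹(ℂ)` (the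
action being induced by an algebraic homomorphism `ρ : T → GL₂(ℂ)`, to which every
algebraic torus action on ℙ¹ lifts), and let `E` be a `T`-equivariant algebraic vector
bundle on `X` with equivariant structure `S`.  Then there exist `T`-equivariant algebraic
line subbundles `L 0, …, L (m-1)` of `E` whose fibers are independent and span each fiber
of `E`; i.e. the natural map `L 0 ⊕ ⋯ ⊕ L (m-1) → E`, `(v_1, …, v_m) ↦ v_1 + ⋯ + v_m`,
is a `T`-equivariant isomorphism of vector bundles over ℙ¹. -/
theorem equivariant_grothendieck {r k : ℕ} (ρ : (Fin r → ℂˣ) →* GL (Fin 2) ℂ)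
    (hρ : IsAlgHom ρ) (E : Cocycle k) (S : EqStruct ρ E) :
    ∃ (m : ℕ) (L : Fin m → EqSub ρ E S 1),
      (∀ v : V2x, iSupIndep fun i => (L i).p v) ∧
      (∀ v : V2x, (⨆ i, (L i).p v) = ⊤) := by
  classical
  obtain ⟨Φ, a, μ, halg, hunit, hscal, hequiv⟩ := EqGroth.master ρ hρ E S
  -- inverse matrices
  have hinv : ∀ v, ∃ B : Matrix (Fin k) (Fin k) ℂ, B * Φ v = 1 ∧ Φ v * B = 1 := by
    intro v
    obtain ⟨u, hu⟩ := hunit v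
    exact ⟨(u⁻¹ : _), by simp [hu, ← Matrix.coe_units_inv], by simp [hu, ← Matrix.coe_units_inv]⟩
  choose B hB1 hB2 using hinv
  -- columns
  set col : V2x → Fin k → Fin k → ℂ := fun v i => EqGroth.colv (Φ v) i with hcol
  have hmulvec_inj : ∀ v (g : Fin k → ℂ), (Φ v).mulVec g = 0 → g = 0 := by
    intro v g hg
    have : (B v).mulVec ((Φ v).mulVec g) = g := by
      rw [Matrix.mulVec_mulVec, hB1, Matrix.one_mulVec]
    rw [hg, Matrix.mulVec_zero] at this
    exact this.symm
  have hcol_ne : ∀ v i, col v i ≠ 0 := by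
    intro v i h
    have h0 : (Φ v).mulVec (Pi.single i 1) = 0 := by
      funext j
      have := congrFun h j
      simpa [hcol, EqGroth.colv, Matrix.mulVec_single] using this
    have := hmulvec_inj v _ h0
    have := congrFun this i
    simp at this
  -- independence of columns
  have hLI : ∀ v, LinearIndependent ℂ (col v) := by
    intro v
    rw [Fintype.linearIndependent_iff]
    intro g hg i
    have : (Φ v).mulVec g = 0 := by rw [← EqGroth.sum_smul_colv]; exact hg
    exact congrFun (hmulvec_inj v g this) i
  -- spanning
  have hspan : ∀ v, Submodule.span ℂ (Set.range (col v)) = ⊤ := by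
    intro v
    rw [Submodule.eq_top_iff']
    intro x
    have hx : x = ∑ i, ((B v).mulVec x) i • col v i := by
      rw [EqGroth.sum_smul_colv, Matrix.mulVec_mulVec, hB2, Matrix.one_mulVec]
    rw [hx]
    exact Submodule.sum_mem _ fun i _ =>
      Submodule.smul_mem _ _ (Submodule.subset_span (Set.mem_range_self i))
  -- the line subbundles
  choose P hP using fun i j => halg i j
  refine ⟨k, fun i =>
    { p := fun v => Submodule.span ℂ {col v i}
      rank_eq := ?_
      scal := ?_
      equivariant := ?_
      locfree := ?_ }, ?_, ?_⟩
  · intro v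
    exact finrank_span_singleton (hcol_ne v i)
  · intro lam v
    have h1 : col (usmul lam v) i = ((lam : ℂ) ^ (a i)) • (E.c lam v).mulVec (col v i) := by
      rw [hcol]
      simp only [hscal lam v]
      rw [EqGroth.colv_mul_diagonal, EqGroth.colv_mul]
    show Submodule.span ℂ {col (usmul lam v) i}
        = (Submodule.span ℂ {col v i}).map (E.c lam v).mulVecLin
    rw [h1, Submodule.map_span, Set.image_singleton, Matrix.mulVecLin_apply]
    exact Submodule.span_singleton_smul_eq
      (isUnit_iff_ne_zero.2 (zpow_ne_zero _ (Units.ne_zero lam))) _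
  · intro t v
    have h1 : col (act ρ t v) i = (∏ j, (t j : ℂ) ^ (μ i j)) • (S.b t v).mulVec (col v i) := by
      rw [hcol]
      simp only [hequiv t v]
      rw [EqGroth.colv_mul_diagonal, EqGroth.colv_mul]
    show Submodule.span ℂ {col (act ρ t v) i}
        = (Submodule.span ℂ {col v i}).map (S.b t v).mulVecLin
    rw [h1, Submodule.map_span, Set.image_singleton, Matrix.mulVecLin_apply]
    refine Submodule.span_singleton_smul_eq (isUnit_iff_ne_zero.2 ?_) _
    exact Finset.prod_ne_zero_iff.2 fun j _ => zpow_ne_zero _ (Units.ne_zero (t j))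
  · intro v₀
    refine ⟨fun _ j => P j i, 1, by simp, ?_⟩
    intro v _
    have : (Set.range fun (_ : Fin 1) => fun j => eval v.1 (P j i) / eval v.1 1)
        = {col v i} := by
      rw [Set.range_unique]
      congr 1
      funext j
      simp [hcol, EqGroth.colv, ← hP j i]
    rw [this]
  · intro v
    exact (hLI v).iSupIndep_span_singleton
  · intro v
    rw [← Submodule.span_range_eq_iSup, hspan v]

end
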